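/- Let G be a simple, 3-vertex-connected graph with gon(G) = 3, and let D be an effective divisor on G with r(D) = 1 and deg(D) = 3. If D ∼ (v₁) + (v₂) + (v₃) for vertices v₁, v₂, v₃ ∈ V(G), then either v₁ = v₂ = v₃ or v₁, v₂, v₃ are pairwise distinct. -/

import Mathlib

/-- A finite loopless multigraph: a finite vertex type, a finite edge type,
and an assignment of an unordered pair of distinct endpoints to each edge. -/
structure Multigraph where
  V : Type
  E : Type
  [fintypeV : Fintype V]
  [fintypeE : Fintype E]
  [decEqV : DecidableEq V]
  ends : E → Sym2 V
  loopless : ∀ e, ¬ (ends e).IsDiag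

attribute [instance] Multigraph.fintypeV Multigraph.fintypeE Multigraph.decEqV

namespace Multigraph

/-- The graph obtained by deleting the edges in `W` is connected (finite graphs are
connected iff the vertex set is nonempty and every nonempty proper vertex subset
has an edge leaving it). -/
def ConnectedWithout (G : Multigraph) (W : Set G.E) : Prop :=
  Nonempty G.V ∧
    ∀ A : Finset G.V, A.Nonempty → A ≠ Finset.univ →
      ∃ e, e ∉ W ∧ ∃ u v, G.ends e = s(u, v) ∧ u ∈ A ∧ v ∉ A

/-- `G` is connected. -/
def Connected (G : Multigraph) : Prop := G.ConnectedWithout ∅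

/-- `G` is `k`-edge-connected: deleting any set of at most `k - 1` edges
leaves a connected graph. -/
def EdgeConnected (G : Multigraph) (k : ℕ) : Prop :=
  ∀ W : Finset G.E, W.card < k → G.ConnectedWithout ↑W

/-- An edge is a bridge if deleting it disconnects the graph. -/
def IsBridge (G : Multigraph) (e : G.E) : Prop := ¬ G.ConnectedWithout {e}

/-- The graph obtained by deleting the vertices in `U` (and all incident edges)
is connected. -/
def ConnectedAvoiding (G : Multigraph) (U : Set G.V) : Prop :=
  (∃ v, v ∉ U) ∧
    ∀ A : Finset G.V, A.Nonempty → (∀ a ∈ A, a ∉ U) → (∃ w, w ∉ U ∧ w ∉ A) →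
      ∃ e u v, G.ends e = s(u, v) ∧ u ∈ A ∧ v ∉ A ∧ v ∉ U

/-- `G` is `k`-vertex-connected: deleting any set of at most `k - 1` vertices
leaves a connected graph. -/
def VertexConnected (G : Multigraph) (k : ℕ) : Prop :=
  ∀ U : Finset G.V, U.card < k → G.ConnectedAvoiding ↑U

/-- `G` is simple: no two distinct edges have the same pair of endpoints. -/
def Simple (G : Multigraph) : Prop :=
  ∀ e e' : G.E, G.ends e = G.ends e' → e = e'

/-- The genus `g(G) = |E| - |V| + 1`. -/
def genus (G : Multigraph) : ℤ :=
  (Fintype.card G.E : ℤ) - (Fintype.card G.V : ℤ) + 1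

/-- A tree is a connected graph of genus 0. -/
def IsTree (G : Multigraph) : Prop := G.Connected ∧ G.genus = 0

/-- The number of edges joining `u` and `v`. -/
noncomputable def numEdges (G : Multigraph) (u v : G.V) : ℕ :=
  Set.ncard {e : G.E | G.ends e = s(u, v)}

/-- The valence of a vertex: the number of incident edges. -/
noncomputable def valence (G : Multigraph) (v : G.V) : ℕ :=
  Set.ncard {e : G.E | v ∈ G.ends e}

/-- A divisor on `G`: an element of the free abelian group on `V(G)`. -/
abbrev Divisor (G : Multigraph) : Type := G.V → ℤ

/-- The degree of a divisor: the sum of its coefficients. -/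
def degree (G : Multigraph) (D : G.Divisor) : ℤ := ∑ v, D v

/-- A divisor is effective if all its coefficients are nonnegative. -/
def Effective (G : Multigraph) (D : G.Divisor) : Prop := ∀ v, 0 ≤ D v

/-- The Laplacian of `G` applied to an integer vector `f`. -/
noncomputable def laplacian (G : Multigraph) (f : G.V → ℤ) : G.Divisor :=
  fun v => ∑ w, (G.numEdges v w : ℤ) * (f v - f w)

/-- Linear equivalence of divisors: the difference is in the image of the Laplacian. -/
def LinEquiv (G : Multigraph) (D D' : G.Divisor) : Prop :=
  ∃ f : G.V → ℤ, D - D' = G.laplacian f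

/-- `D - F` is equivalent to an effective divisor for every effective `F` of degree `k`. -/
def RankGe (G : Multigraph) (D : G.Divisor) (k : ℤ) : Prop :=
  ∀ F : G.Divisor, G.Effective F → G.degree F = k →
    ∃ E' : G.Divisor, G.Effective E' ∧ G.LinEquiv (D - F) E'

/-- The Baker–Norine rank of a divisor. -/
noncomputable def rank (G : Multigraph) (D : G.Divisor) : ℤ :=
  sSup {r : ℤ | r = -1 ∨ (0 ≤ r ∧ G.RankGe D r)}

/-- The (divisorial) gonality of `G`: the minimum degree of an effective divisor
of rank at least 1. -/
noncomputable def gonality (G : Multigraph) : ℕ :=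
  sInf {n : ℕ | ∃ D : G.Divisor, G.Effective D ∧ G.degree D = (n : ℤ) ∧ 1 ≤ G.rank D}

end Multigraph

/-- A morphism of multigraphs: vertices map to vertices, and each edge maps either
to an edge joining the images of its endpoints (if they are distinct) or to the
common image of its endpoints. -/
structure Morphism (G G' : Multigraph) where
  vertexMap : G.V → G'.V
  edgeMap : G.E → G'.E ⊕ G'.V
  map_edge_of_eq : ∀ e u v, G.ends e = s(u, v) → vertexMap u = vertexMap v →
    edgeMap e = Sum.inr (vertexMap u)
  map_edge_of_ne : ∀ e u v, G.ends e = s(u, v) → vertexMap u ≠ vertexMap v →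
    ∃ e', edgeMap e = Sum.inl e' ∧ G'.ends e' = s(vertexMap u, vertexMap v)

namespace Morphism

variable {G G' : Multigraph}

/-- The multiplicity `m_φ(v)` of `φ` at `v` with respect to an edge `e'` of `G'`. -/
noncomputable def mult (φ : Morphism G G') (v : G.V) (e' : G'.E) : ℕ :=
  Set.ncard {e : G.E | v ∈ G.ends e ∧ φ.edgeMap e = Sum.inl e'}

/-- `φ` is harmonic if `m_φ(v)` does not depend on the chosen edge `e'`
incident to `φ(v)`. -/
def Harmonic (φ : Morphism G G') : Prop :=
  ∀ (v : G.V) (e₁ e₂ : G'.E),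
    φ.vertexMap v ∈ G'.ends e₁ → φ.vertexMap v ∈ G'.ends e₂ →
      φ.mult v e₁ = φ.mult v e₂

/-- `φ` is non-degenerate if `m_φ(v) > 0` for every vertex `v`. -/
def Nondegenerate (φ : Morphism G G') : Prop :=
  ∀ (v : G.V) (e' : G'.E), φ.vertexMap v ∈ G'.ends e' → 0 < φ.mult v e'

/-- `φ` has degree `d`: every edge of `G'` has exactly `d` preimages. -/
def HasDegree (φ : Morphism G G') (d : ℕ) : Prop :=
  Nonempty G'.E ∧ ∀ e' : G'.E, Set.ncard {e : G.E | φ.edgeMap e = Sum.inl e'} = d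

end Morphism

/-!
Suppose `D ∼ 2v + w` with `v ≠ w`. A simple connected graph on `n ≥ 2` vertices has gonality at
most `n - 1`, so `gon(G) = 3` forces `n ≥ 4`, and then 3-vertex-connectivity gives every vertex at
least three neighbours. Since `r(D) = 1`, some effective `E ∼ D` has a chip at a vertex
`u ∉ {v, w}`; write `2v + w - E = Δf`. On the set `A` where `f` is maximal, a vertex `x` has at
most `(2v + w)(x)` neighbours outside `A`, and `A` is proper because `E ≠ 2v + w`. If `A ⊆ {v, w}`,
some vertex of `A` has fewer than three neighbours. Otherwise the vertices of `A` off `{v, w}` have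
all their neighbours in `A`, and since `G - {v, w}` is connected this forces `A` to be everything.
-/

namespace Multigraph

open Finset

variable {G : Multigraph}

def Adj (G : Multigraph) (x y : G.V) : Prop := ∃ e, G.ends e = s(x, y)

noncomputable def neighbors (G : Multigraph) (x : G.V) : Finset G.V :=
  (Set.toFinite {y | G.Adj x y}).toFinset

@[simp]
lemma mem_neighbors {x y : G.V} : y ∈ G.neighbors x ↔ G.Adj x y :=
  Set.Finite.mem_toFinset _

lemma Adj.ne {x y : G.V} (h : G.Adj x y) : x ≠ y := by
  rintro rfl
  obtain ⟨e, he⟩ := h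
  exact G.loopless e (he ▸ Sym2.mk_isDiag_iff.mpr rfl)

lemma Adj.symm {x y : G.V} (h : G.Adj x y) : G.Adj y x := by
  obtain ⟨e, he⟩ := h
  exact ⟨e, he.trans Sym2.eq_swap⟩

lemma not_mem_neighbors_self (x : G.V) : x ∉ G.neighbors x := fun h =>
  (mem_neighbors.mp h).ne rfl

lemma Adj.one_le_numEdges {x y : G.V} (h : G.Adj x y) : 1 ≤ G.numEdges x y :=
  (Set.ncard_pos (Set.toFinite _)).mpr h

lemma numEdges_comm (x y : G.V) : G.numEdges x y = G.numEdges y x := by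
  simp only [numEdges, Sym2.eq_swap]

lemma numEdges_le_one (hs : G.Simple) (x y : G.V) : G.numEdges x y ≤ 1 :=
  (Set.ncard_le_one (Set.toFinite _)).mpr fun _ ha _ hb => hs _ _ (ha.trans hb.symm)

lemma laplacian_add (f g : G.V → ℤ) :
    G.laplacian (f + g) = G.laplacian f + G.laplacian g := by
  ext v
  simp only [laplacian, Pi.add_apply, ← Finset.sum_add_distrib]
  exact Finset.sum_congr rfl fun _ _ => by ring

lemma laplacian_neg (f : G.V → ℤ) : G.laplacian (-f) = -G.laplacian f := by
  ext v
  simp only [laplacian, Pi.neg_apply, ← Finset.sum_neg_distrib]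
  exact Finset.sum_congr rfl fun _ _ => by ring

lemma laplacian_zero : G.laplacian 0 = 0 := by
  ext v
  simp [laplacian]

lemma degree_sub (D E : G.Divisor) : G.degree (D - E) = G.degree D - G.degree E :=
  Finset.sum_sub_distrib _ _

@[simp]
lemma degree_single (x : G.V) (r : ℤ) : G.degree (Pi.single x r) = r := by
  simp [degree]

lemma degree_laplacian (f : G.V → ℤ) : G.degree (G.laplacian f) = 0 := by
  have hswap : ∑ v, ∑ w, (G.numEdges v w : ℤ) * f w = ∑ v, ∑ w, (G.numEdges v w : ℤ) * f v := by
    rw [Finset.sum_comm]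
    simp only [numEdges_comm]
  simp only [degree, laplacian, mul_sub, Finset.sum_sub_distrib, hswap, sub_self]

lemma Effective.degree_nonneg {D : G.Divisor} (hD : G.Effective D) : 0 ≤ G.degree D :=
  Finset.sum_nonneg fun v _ => hD v

namespace LinEquiv

lemma refl (D : G.Divisor) : G.LinEquiv D D := ⟨0, by rw [sub_self, laplacian_zero]⟩

lemma symm {D E : G.Divisor} (h : G.LinEquiv D E) : G.LinEquiv E D := by
  obtain ⟨f, hf⟩ := h
  exact ⟨-f, by rw [laplacian_neg, ← hf, neg_sub]⟩

lemma trans {D E F : G.Divisor} (h₁ : G.LinEquiv D E) (h₂ : G.LinEquiv E F) :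
    G.LinEquiv D F := by
  obtain ⟨f, hf⟩ := h₁
  obtain ⟨g, hg⟩ := h₂
  exact ⟨f + g, by rw [laplacian_add, ← hf, ← hg, sub_add_sub_cancel]⟩

lemma degree_eq {D E : G.Divisor} (h : G.LinEquiv D E) : G.degree D = G.degree E := by
  obtain ⟨f, hf⟩ := h
  have := degree_laplacian f
  rw [← hf, degree_sub] at this
  omega

end LinEquiv

lemma card_le_laplacian_of_forall_le {f : G.V → ℤ} {x : G.V} (hx : ∀ z, f z ≤ f x)
    {Y : Finset G.V} (hY : ∀ y ∈ Y, G.Adj x y ∧ f y < f x) : (#Y : ℤ) ≤ G.laplacian f x := by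
  have hterm : ∀ y, 0 ≤ (G.numEdges x y : ℤ) * (f x - f y) := fun y =>
    mul_nonneg (Int.natCast_nonneg _) (sub_nonneg.mpr (hx y))
  calc (#Y : ℤ) = ∑ _y ∈ Y, 1 := by simp
    _ ≤ ∑ y ∈ Y, (G.numEdges x y : ℤ) * (f x - f y) := by
      refine Finset.sum_le_sum fun y hy => ?_
      have h₁ : (1 : ℤ) ≤ G.numEdges x y := by exact_mod_cast (hY y hy).1.one_le_numEdges
      exact one_le_mul_of_one_le_of_one_le h₁ (by linarith [(hY y hy).2])
    _ ≤ G.laplacian f x :=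
      Finset.sum_le_sum_of_subset_of_nonneg (Finset.subset_univ Y) fun y _ _ => hterm y

lemma le_degree_of_rankGe [Nonempty G.V] {D : G.Divisor} {r : ℤ} (hr : 0 ≤ r)
    (h : G.RankGe D r) : r ≤ G.degree D := by
  obtain ⟨x⟩ := ‹Nonempty G.V›
  obtain ⟨E, hE, hDE⟩ := h (Pi.single x r) (fun z => by
    by_cases hz : z = x <;> simp [hz, hr]) (degree_single x r)
  have := hE.degree_nonneg
  rw [← hDE.degree_eq, degree_sub, degree_single] at this
  omega

lemma bddAbove_rankSet [Nonempty G.V] (D : G.Divisor) :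
    BddAbove {r : ℤ | r = -1 ∨ 0 ≤ r ∧ G.RankGe D r} := by
  refine ⟨max (G.degree D) (-1), ?_⟩
  rintro r (rfl | ⟨hr, h⟩)
  · exact le_max_right _ _
  · exact le_max_of_le_left (le_degree_of_rankGe hr h)

lemma rankGe_of_rank_eq [Nonempty G.V] {D : G.Divisor} {r : ℤ} (hr : 0 ≤ r)
    (h : G.rank D = r) : G.RankGe D r := by
  have hmem := Int.csSup_mem ⟨-1, Or.inl rfl⟩ (bddAbove_rankSet (G := G) D)
  rw [show sSup _ = r from h] at hmem
  exact hmem.resolve_left (by omega) |>.2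

lemma le_rank_of_rankGe [Nonempty G.V] {D : G.Divisor} {r : ℤ} (hr : 0 ≤ r)
    (h : G.RankGe D r) : r ≤ G.rank D :=
  le_csSup (bddAbove_rankSet D) (Or.inr ⟨hr, h⟩)

lemma eq_single_of_effective_of_degree_eq_one {F : G.Divisor} (hF : G.Effective F)
    (h : G.degree F = 1) : ∃ x, F = Pi.single x 1 := by
  obtain ⟨x, hx⟩ : ∃ x, 0 < F x := by
    by_contra! hle
    have : G.degree F ≤ 0 := Finset.sum_nonpos fun v _ => hle v
    omega
  have hrest : G.Effective (F - Pi.single x 1) := fun z => by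
    by_cases hz : z = x
    · subst hz
      simp only [Pi.sub_apply, Pi.single_eq_same]
      omega
    · simpa [hz] using hF z
  have hzero : G.degree (F - Pi.single x 1) = 0 := by rw [degree_sub, h, degree_single, sub_self]
  have := (Finset.sum_eq_zero_iff_of_nonneg fun z _ => hrest z).mp hzero
  exact ⟨x, funext fun z => sub_eq_zero.mp (this z (Finset.mem_univ z))⟩

lemma rankGe_one_of_forall {D : G.Divisor}
    (h : ∀ x, ∃ E, G.Effective E ∧ G.LinEquiv (D - Pi.single x 1) E) : G.RankGe D 1 := by
  intro F hF hdeg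
  obtain ⟨x, rfl⟩ := eq_single_of_effective_of_degree_eq_one hF hdeg
  exact h x

lemma RankGe.exists_linEquiv_one_le {D : G.Divisor} (h : G.RankGe D 1) (u : G.V) :
    ∃ E, G.Effective E ∧ 1 ≤ E u ∧ G.LinEquiv D E := by
  obtain ⟨E, hE, ⟨f, hf⟩⟩ := h (Pi.single u 1)
    (fun z => by by_cases hz : z = u <;> simp [hz]) (degree_single u 1)
  refine ⟨E + Pi.single u 1, fun z => ?_, by simpa using hE u, f, ?_⟩
  · have := hE z
    by_cases hz : z = u
    · subst hz
      simp only [Pi.add_apply, Pi.single_eq_same]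
      omega
    · simpa [hz]
  · rw [← hf]
    abel

lemma Connected.exists_adj [Nontrivial G.V] (hG : G.Connected) (c : G.V) : ∃ y, G.Adj c y := by
  obtain ⟨d, hdc⟩ := exists_ne c
  obtain ⟨e, -, a, b, he, ha, -⟩ := hG.2 {c} (singleton_nonempty c)
    fun h => hdc (mem_singleton.mp (h ▸ mem_univ d))
  rw [mem_singleton] at ha
  subst ha
  exact ⟨b, e, he⟩

lemma laplacian_single_of_ne {c z : G.V} (hz : z ≠ c) :
    G.laplacian (Pi.single c 1) z = -G.numEdges z c := by
  simp only [laplacian]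
  rw [Finset.sum_eq_single c (fun y _ hy => by simp [hz, hy]) (by simp)]
  simp [hz]

/-- One chip on every vertex but `c` has rank at least one: to free a chip at `c`, fire all the
other vertices; in a simple graph each of them loses at most its single chip. -/
lemma gonality_le_card_sub_one [Nontrivial G.V] (hG : G.Connected) (hs : G.Simple) :
    G.gonality ≤ Fintype.card G.V - 1 := by
  obtain ⟨c⟩ := hG.1
  obtain ⟨b, hcb⟩ := hG.exists_adj c
  set K : G.Divisor := 1 - Pi.single c 1
  have hK : G.Effective K := fun z => by by_cases hz : z = c <;> simp [K, hz]
  have hdeg : G.degree K = (Fintype.card G.V - 1 : ℕ) := by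
    rw [Nat.cast_sub Fintype.card_pos, degree_sub, degree_single]
    simp [degree]
  have hfree : ∃ E, G.Effective E ∧ G.LinEquiv (K - Pi.single c 1) E := by
    refine ⟨K - Pi.single c 1 + G.laplacian (Pi.single c 1), fun z => ?_,
      -Pi.single c 1, by rw [laplacian_neg]; abel⟩
    by_cases hz : z = c
    · subst hz
      have := card_le_laplacian_of_forall_le (f := Pi.single z 1) (x := z) (Y := {b})
        (fun y => by by_cases hy : y = z <;> simp [hy])
        (by simpa [hcb.ne.symm] using hcb)
      simp only [card_singleton, Nat.cast_one, Pi.add_apply, Pi.sub_apply, Pi.one_apply,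
        Pi.single_eq_same, K] at this ⊢
      omega
    · have := numEdges_le_one hs z c
      simp only [K, Pi.add_apply, Pi.sub_apply, Pi.one_apply, Pi.single_eq_of_ne hz,
        laplacian_single_of_ne hz]
      omega
  have hrank : G.RankGe K 1 := rankGe_one_of_forall fun x => by
    by_cases hxc : x = c
    · exact hxc ▸ hfree
    · refine ⟨K - Pi.single x 1, fun z => ?_, LinEquiv.refl _⟩
      by_cases hz : z = x <;> by_cases hzc : z = c <;> simp_all [K]
  exact Nat.sInf_le ⟨K, hK, hdeg, le_rank_of_rankGe zero_le_one hrank⟩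

lemma three_le_card_neighbors (h3 : G.VertexConnected 3) (hcard : 4 ≤ Fintype.card G.V)
    (x : G.V) : 3 ≤ #(G.neighbors x) := by
  by_contra! hlt
  obtain ⟨w, -, hw⟩ := exists_mem_notMem_of_card_lt_card
    (s := insert x (G.neighbors x)) (t := univ) (by
      rw [card_univ]
      linarith [card_insert_le x (G.neighbors x)])
  rw [mem_insert, not_or] at hw
  obtain ⟨e, a, b, he, ha, -, hbN⟩ := (h3 (G.neighbors x) hlt).2 {x} (singleton_nonempty x)
    (by simpa using not_mem_neighbors_self x) ⟨w, hw.2, by simpa using hw.1⟩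
  rw [mem_singleton] at ha
  subst ha
  exact hbN (mem_coe.mpr (mem_neighbors.mpr ⟨e, he⟩))

lemma eq_univ_of_neighbors_subset (h3 : G.VertexConnected 3)
    (hmin : ∀ x, 3 ≤ #(G.neighbors x)) {U A : Finset G.V} (hU : #U ≤ 2) (hAU : ¬ A ⊆ U)
    (hA : ∀ x ∈ A, x ∉ U → G.neighbors x ⊆ A) : A = univ := by
  have hout : ∀ z ∉ U, z ∈ A := by
    by_contra! ⟨z, hzU, hzA⟩
    obtain ⟨x₀, hx₀A, hx₀U⟩ := not_subset.mp hAU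
    obtain ⟨e, x, y, he, hx, hy, hyU⟩ := (h3 U (by omega)).2 (A \ U)
      ⟨x₀, mem_sdiff.mpr ⟨hx₀A, hx₀U⟩⟩ (fun a ha => by simpa using (mem_sdiff.mp ha).2)
      ⟨z, by simpa using hzU, fun h => hzA (mem_sdiff.mp h).1⟩
    rw [mem_sdiff] at hx hy
    exact hy ⟨hA x hx.1 hx.2 (mem_neighbors.mpr ⟨e, he⟩), by simpa using hyU⟩
  refine eq_univ_of_forall fun y => ?_
  by_cases hyU : y ∈ U
  · obtain ⟨x, hxN, hxU⟩ := exists_mem_notMem_of_card_lt_card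
      (lt_of_le_of_lt hU (hmin y))
    exact hA x (hout x hxU) hxU (mem_neighbors.mpr (mem_neighbors.mp hxN).symm)
  · exact hout y hyU

lemma not_linEquiv_two_add_one (h3 : G.VertexConnected 3) (hmin : ∀ x, 3 ≤ #(G.neighbors x))
    {D : G.Divisor} (hD : G.RankGe D 1) {v w : G.V} (hvw : v ≠ w) :
    ¬ G.LinEquiv D (Pi.single v 1 + Pi.single v 1 + Pi.single w 1) := by
  intro hT
  set T : G.Divisor := Pi.single v 1 + Pi.single v 1 + Pi.single w 1
  have hTv : T v = 2 := by simp [T, hvw]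
  have hTw : T w = 1 := by simp [T, hvw.symm]
  have hT0 : ∀ z ∉ ({v, w} : Finset G.V), T z = 0 := fun z hz => by
    rw [mem_insert, mem_singleton, not_or] at hz
    simp [T, hz.1, hz.2]
  obtain ⟨u, -, hu⟩ := exists_mem_notMem_of_card_lt_card
    ((card_le_two (a := v) (b := w)).trans_lt (hmin v))
  obtain ⟨E, hE, hEu, hDE⟩ := hD.exists_linEquiv_one_le u
  obtain ⟨f, hf⟩ := hT.symm.trans hDE
  set A := univ.filter fun z => ∀ y, f y ≤ f z
  have hcut : ∀ x ∈ A, #(G.neighbors x \ A) ≤ T x := by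
    intro x hx
    have hbound := card_le_laplacian_of_forall_le (mem_filter.mp hx).2 (Y := G.neighbors x \ A)
      fun y hy => by
        rw [mem_sdiff, mem_neighbors] at hy
        refine ⟨hy.1, lt_of_not_ge fun hle => hy.2 (mem_filter.mpr ⟨mem_univ y, fun z => ?_⟩)⟩
        exact ((mem_filter.mp hx).2 z).trans hle
    have := congrFun hf x
    simp only [Pi.sub_apply] at this
    linarith [hE x]
  have hA : A ≠ univ := by
    intro hAu
    have hmax : ∀ y z, f y ≤ f z := fun y z => (mem_filter.mp (hAu ▸ mem_univ z : z ∈ A)).2 y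
    have hzero : G.laplacian f u = 0 :=
      Finset.sum_eq_zero fun y _ => by rw [le_antisymm (hmax u y) (hmax y u), sub_self, mul_zero]
    have := congrFun hf u
    simp only [Pi.sub_apply, hT0 u hu, hzero] at this
    omega
  by_cases hAU : A ⊆ {v, w}
  · have hsmall : ∀ x ∈ A, #(G.neighbors x) ≤ T x + #(A.erase x) := fun x hx => by
      have hsub : G.neighbors x ⊆ (G.neighbors x \ A) ∪ A.erase x := fun y hy => by
        by_cases hyA : y ∈ A
        · refine mem_union_right _ (mem_erase.mpr ⟨?_, hyA⟩)
          exact fun h => not_mem_neighbors_self x (h ▸ hy)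
        · exact mem_union_left _ (mem_sdiff.mpr ⟨hy, hyA⟩)
      have := (card_le_card hsub).trans (card_union_le _ _)
      linarith [hcut x hx]
    by_cases hwA : w ∈ A
    · have hrest : A.erase w ⊆ {v} := fun y hy => by
        have := hAU (mem_of_mem_erase hy)
        simp only [mem_insert, mem_singleton] at this ⊢
        exact this.resolve_right (ne_of_mem_erase hy)
      have := (card_le_card hrest).trans_eq (card_singleton v)
      linarith [hsmall w hwA, hmin w]
    · have hAv : A ⊆ {v} := fun y hy => by
        have := hAU hy
        simp only [mem_insert, mem_singleton] at this ⊢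
        exact this.resolve_right fun h => hwA (h ▸ hy)
      obtain ⟨m, -, hm⟩ := exists_max_image univ f ⟨v, mem_univ v⟩
      have hmA : m ∈ A := mem_filter.mpr ⟨mem_univ m, fun y => hm y (mem_univ y)⟩
      obtain rfl : v = m := (mem_singleton.mp (hAv hmA)).symm
      have hrest : A.erase v = ∅ := subset_empty.mp (by simpa using erase_subset_erase v hAv)
      have := hsmall v hmA
      rw [hrest, card_empty, Nat.cast_zero] at this
      linarith [hmin v]
  · exact hA (eq_univ_of_neighbors_subset h3 hmin card_le_two hAU fun x hx hxU => by
      have := hcut x hx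
      rw [hT0 x hxU] at this
      exact sdiff_eq_empty_iff_subset.mp (card_eq_zero.mp (by omega)))

end Multigraph

theorem stmt_12_general (G : Multigraph) (hG : G.Connected) (hs : G.Simple)
    (h3 : G.VertexConnected 3) (hgon : G.gonality = 3)
    (D : G.Divisor) (hrank : G.rank D = 1)
    (v₁ v₂ v₃ : G.V)
    (heq : G.LinEquiv D (fun w =>
      (if w = v₁ then 1 else 0) + (if w = v₂ then 1 else 0) + (if w = v₃ then 1 else 0))) :
    (v₁ = v₂ ∧ v₂ = v₃) ∨ (v₁ ≠ v₂ ∧ v₁ ≠ v₃ ∧ v₂ ≠ v₃) := by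
  have hsum : (fun w => (if w = v₁ then (1 : ℤ) else 0) + (if w = v₂ then 1 else 0) +
      (if w = v₃ then 1 else 0)) = Pi.single v₁ 1 + Pi.single v₂ 1 + Pi.single v₃ 1 := by
    ext w
    simp [Pi.single_apply]
  rw [hsum] at heq
  have key : ∀ {v w : G.V}, v ≠ w →
      ¬ G.LinEquiv D (Pi.single v 1 + Pi.single v 1 + Pi.single w 1) := fun {v w} hvw => by
    have : Nontrivial G.V := ⟨⟨v, w, hvw⟩⟩
    have hcard : 4 ≤ Fintype.card G.V := by
      by_contra! hlt
      have := Multigraph.gonality_le_card_sub_one hG hs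
      omega
    exact Multigraph.not_linEquiv_two_add_one h3 (Multigraph.three_le_card_neighbors h3 hcard)
      (Multigraph.rankGe_of_rank_eq zero_le_one hrank) hvw
  rcases eq_or_ne v₁ v₂ with rfl | h12
  · rcases eq_or_ne v₁ v₃ with rfl | h13
    · exact Or.inl ⟨rfl, rfl⟩
    · exact (key h13 heq).elim
  · rcases eq_or_ne v₁ v₃ with rfl | h13
    · exact (key h12 (by rwa [add_right_comm] at heq)).elim
    rcases eq_or_ne v₂ v₃ with rfl | h23
    · exact (key h12.symm (by convert heq using 1; abel)).elim
    · exact Or.inr ⟨h12, h13, h23⟩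

/-- Let `G` be simple and 3-vertex-connected with `gon(G) = 3`, and
let `D` be effective with `r(D) = 1` and `deg(D) = 3`. If `D ∼ (v₁) + (v₂) + (v₃)`,
then either `v₁ = v₂ = v₃` or `v₁, v₂, v₃` are pairwise distinct. -/
theorem stmt_12 (G : Multigraph) (hG : G.Connected) (hs : G.Simple)
    (h3 : G.VertexConnected 3) (hgon : G.gonality = 3)
    (D : G.Divisor) (hD : G.Effective D) (hrank : G.rank D = 1)
    (hdeg : G.degree D = 3) (v₁ v₂ v₃ : G.V)
    (heq : G.LinEquiv D (fun w =>
      (if w = v₁ then 1 else 0) + (if w = v₂ then 1 else 0) + (if w = v₃ then 1 else 0))) :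
    (v₁ = v₂ ∧ v₂ = v₃) ∨ (v₁ ≠ v₂ ∧ v₁ ≠ v₃ ∧ v₂ ≠ v₃) :=
  stmt_12_general G hG hs h3 hgon D hrank v₁ v₂ v₃ heq
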